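/- arXiv:2005.03376 — 3 statements merged into one kernel-verified Lean document; each statement's English description precedes it below -/
import Mathlib

section
/- Let A, B, C, D be Stone spaces (compact Hausdorff totally disconnected topological spaces) and let f : A → B, g : A → C, h : B → D, k : C → D be continuous open maps with h ∘ f = k ∘ g. Then the following are equivalent: (i) the universal map into the pullback is surjective, i.e. for all b ∈ B and c ∈ C with h b = k c there exists a ∈ A with f a = b and g a = c; (ii) the square satisfies the Beck–Chevalley condition, i.e. for every clopen subset U ⊆ B one has k ⁻¹' (h '' U) = g '' (f ⁻¹' U). -/
/-- For a commuting square of continuous open maps between Stone spaces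
(compact Hausdorff totally disconnected spaces), surjectivity of the universal
map into the pullback is equivalent to the Beck–Chevalley condition (stated
for clopen, i.e. compact open, subsets of `B`). -/
theorem stmt_0 {A B C D : Type*}
    [TopologicalSpace A] [TopologicalSpace B] [TopologicalSpace C] [TopologicalSpace D]
    [CompactSpace A] [T2Space A] [TotallyDisconnectedSpace A]
    [CompactSpace B] [T2Space B] [TotallyDisconnectedSpace B]
    [CompactSpace C] [T2Space C] [TotallyDisconnectedSpace C]
    [CompactSpace D] [T2Space D] [TotallyDisconnectedSpace D]
    (f : A → B) (g : A → C) (h : B → D) (k : C → D)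
    (hf : Continuous f) (hfo : IsOpenMap f)
    (hg : Continuous g) (hgo : IsOpenMap g)
    (hh : Continuous h) (hho : IsOpenMap h)
    (hk : Continuous k) (hko : IsOpenMap k)
    (hcomm : h ∘ f = k ∘ g) :
    (∀ (b : B) (c : C), h b = k c → ∃ a : A, f a = b ∧ g a = c) ↔
      (∀ U : Set B, IsClopen U → k ⁻¹' (h '' U) = g '' (f ⁻¹' U)) := by
  constructor
  · intro hsurj U _
    ext c
    constructor
    · rintro ⟨b, hbU, hbc⟩
      obtain ⟨a, rfl, rfl⟩ := hsurj b c hbc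
      exact ⟨a, hbU, rfl⟩
    · rintro ⟨a, haU, rfl⟩
      exact ⟨f a, haU, congrFun hcomm a⟩
  · intro hbc b c hbceq
    -- For each clopen `U ∋ b`, the set `f ⁻¹' U ∩ g ⁻¹' {c}` is nonempty compact closed.
    set S : { s : Set B // IsClopen s ∧ b ∈ s } → Set A :=
      fun U => f ⁻¹' U.1 ∩ g ⁻¹' {c} with hS
    have hne : ∀ U, (S U).Nonempty := by
      rintro ⟨U, hU, hbU⟩
      have : c ∈ k ⁻¹' (h '' U) := ⟨b, hbU, hbceq⟩
      rw [hbc U hU] at this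
      obtain ⟨a, haU, hac⟩ := this
      exact ⟨a, haU, hac⟩
    have hcl : ∀ U, IsClosed (S U) := fun U =>
      (U.2.1.1.preimage hf).inter (isClosed_singleton.preimage hg)
    have : Nonempty { s : Set B // IsClopen s ∧ b ∈ s } := ⟨⟨Set.univ, isClopen_univ, trivial⟩⟩
    have hdir : Directed (· ⊇ ·) S := by
      rintro ⟨U, hU, hbU⟩ ⟨V, hV, hbV⟩
      refine ⟨⟨U ∩ V, hU.inter hV, hbU, hbV⟩, ?_, ?_⟩
      · rintro a ⟨⟨h1, _⟩, h2⟩; exact ⟨h1, h2⟩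
      · rintro a ⟨⟨_, h1⟩, h2⟩; exact ⟨h1, h2⟩
    obtain ⟨a, ha⟩ := IsCompact.nonempty_iInter_of_directed_nonempty_isCompact_isClosed
      S hdir hne (fun U => (hcl U).isCompact) hcl
    simp only [Set.mem_iInter, hS, Set.mem_inter_iff, Set.mem_preimage,
      Set.mem_singleton_iff] at ha
    have hfb : f a = b := by
      have h1 : f a ∈ connectedComponent b := by
        rw [connectedComponent_eq_iInter_isClopen b]
        exact Set.mem_iInter.2 fun U => (ha U).1
      rwa [totallyDisconnectedSpace_iff_connectedComponent_singleton.mp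
        inferInstance b, Set.mem_singleton_iff] at h1
    exact ⟨a, hfb, (ha ⟨Set.univ, isClopen_univ, trivial⟩).2⟩
end

section
/- Let A and B be bounded distributive lattices, let f : A → B be a bounded lattice homomorphism (preserving binary meets, binary joins, ⊤ and ⊥), and let h : B → A be a monotone map left adjoint to f (for all a ∈ A, b ∈ B: h b ≤ a ↔ b ≤ f a) satisfying the Frobenius condition h (f a ⊓ b) = a ⊓ h b for all a, b. Then for every b ∈ B the following two collections of subsets of A coincide: { f ⁻¹' F | F is a prime filter on B with b ∈ F } = { G | G is a prime filter on A with h b ∈ G }. In particular, for every prime filter G on A with h b ∈ G there exists a prime filter F on B with b ∈ F and f ⁻¹' F = G. -/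
/-- A prime filter on a lattice: a nonempty, proper, upward-closed subset that
is closed under binary meets and is prime. -/
def IsPrimeFilter {L : Type*} [Lattice L] (F : Set L) : Prop :=
  F.Nonempty ∧ F ≠ Set.univ ∧
  (∀ a b : L, a ∈ F → a ≤ b → b ∈ F) ∧
  (∀ a b : L, a ∈ F → b ∈ F → a ⊓ b ∈ F) ∧
  (∀ a b : L, a ⊔ b ∈ F → a ∈ F ∨ b ∈ F)

/-- For a bounded lattice homomorphism `f : A → B` of bounded distributive
lattices with a monotone left adjoint `h` satisfying the Frobenius condition:
for every `b ∈ B`, the preimages under `f` of prime filters on `B` containing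
`b` are exactly the prime filters on `A` containing `h b`. In particular, every
prime filter `G` on `A` with `h b ∈ G` is of the form `f ⁻¹' F` for some prime
filter `F` on `B` with `b ∈ F`. -/
theorem stmt_9 {A B : Type*} [DistribLattice A] [BoundedOrder A]
    [DistribLattice B] [BoundedOrder B]
    (f : A → B)
    (hmeet : ∀ a a' : A, f (a ⊓ a') = f a ⊓ f a')
    (hjoin : ∀ a a' : A, f (a ⊔ a') = f a ⊔ f a')
    (htop : f ⊤ = ⊤) (hbot : f ⊥ = ⊥)
    (h : B → A) (hh : Monotone h)
    (adj : ∀ (a : A) (b : B), h b ≤ a ↔ b ≤ f a)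
    (frob : ∀ (a : A) (b : B), h (f a ⊓ b) = a ⊓ h b) :
    ∀ b : B,
      ({ S : Set A | ∃ F : Set B, IsPrimeFilter F ∧ b ∈ F ∧ S = f ⁻¹' F } =
        { G : Set A | IsPrimeFilter G ∧ h b ∈ G }) ∧
      (∀ G : Set A, IsPrimeFilter G → h b ∈ G →
        ∃ F : Set B, IsPrimeFilter F ∧ b ∈ F ∧ f ⁻¹' F = G) := by
  have fmono : Monotone f := by
    intro x y hxy
    have := hjoin x y
    rw [sup_eq_right.mpr hxy] at this
    rw [this]; exact le_sup_left
  intro b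
  -- The hard direction: realize a prime filter `G` on `A` as a preimage.
  have key : ∀ G : Set A, IsPrimeFilter G → h b ∈ G →
      ∃ F : Set B, IsPrimeFilter F ∧ b ∈ F ∧ f ⁻¹' F = G := by
    intro G hG hbG
    obtain ⟨hGne, hGpr, hGup, hGmeet, hGprime⟩ := hG
    have htopG : (⊤ : A) ∈ G := by
      obtain ⟨x, hx⟩ := hGne; exact hGup x ⊤ hx le_top
    have hbotG : (⊥ : A) ∉ G := by
      intro hbot'
      apply hGpr
      ext x; simp only [Set.mem_univ, iff_true]
      exact hGup ⊥ x hbot' bot_le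
    -- the filter generated by `b` and the image of `G`
    set F0 : Set B := {y | ∃ g ∈ G, f g ⊓ b ≤ y} with hF0
    have hF0pf : Order.IsPFilter F0 := by
      apply Order.IsPFilter.of_def
      · exact ⟨b, ⊤, htopG, by simp [htop]⟩
      · rintro y₁ ⟨g₁, hg₁, hle₁⟩ y₂ ⟨g₂, hg₂, hle₂⟩
        refine ⟨f (g₁ ⊓ g₂) ⊓ b, ⟨g₁ ⊓ g₂, hGmeet _ _ hg₁ hg₂, le_rfl⟩, ?_, ?_⟩
        · exact le_trans (inf_le_inf_right b (by rw [hmeet]; exact inf_le_left)) hle₁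
        · exact le_trans (inf_le_inf_right b (by rw [hmeet]; exact inf_le_right)) hle₂
      · rintro x y hxy ⟨g, hg, hle⟩
        exact ⟨g, hg, hle.trans hxy⟩
    -- the ideal generated by the image of the complement of `G`
    set I0 : Set B := {y | ∃ a : A, a ∉ G ∧ y ≤ f a} with hI0
    have hI0id : Order.IsIdeal I0 := by
      constructor
      · rintro x y hyx ⟨a, haG, hle⟩
        exact ⟨a, haG, hyx.trans hle⟩
      · exact ⟨⊥, ⊥, hbotG, bot_le⟩
      · rintro y₁ ⟨a₁, ha₁, hle₁⟩ y₂ ⟨a₂, ha₂, hle₂⟩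
        refine ⟨f (a₁ ⊔ a₂), ⟨a₁ ⊔ a₂, ?_, le_rfl⟩, ?_, ?_⟩
        · intro hsup
          rcases hGprime _ _ hsup with h1 | h2
          · exact ha₁ h1
          · exact ha₂ h2
        · exact hle₁.trans (fmono le_sup_left)
        · exact hle₂.trans (fmono le_sup_right)
    -- F0 and I0 are disjoint, thanks to adjunction + Frobenius
    have hdisj : Disjoint ((hF0pf.toPFilter : Order.PFilter B) : Set B)
        ((hI0id.toIdeal : Order.Ideal B) : Set B) := by
      rw [Set.disjoint_left]
      rintro y ⟨g, hg, hle⟩ ⟨a, haG, hle'⟩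
      apply haG
      have hba : f g ⊓ b ≤ f a := le_trans hle hle'
      have : h (f g ⊓ b) ≤ a := (adj a (f g ⊓ b)).mpr hba
      rw [frob] at this
      exact hGup _ _ (hGmeet _ _ hg hbG) this
    obtain ⟨J, Jprime, IJ, JdisjF⟩ :=
      DistribLattice.prime_ideal_of_disjoint_filter_ideal hdisj
    haveI := Jprime.toIsProper
    have hJmeet : ∀ {x y : B}, x ⊓ y ∈ J → x ∈ J ∨ y ∈ J :=
      fun {x y} => Order.Ideal.isPrime_iff_mem_or_mem.mp Jprime
    have hF0notJ : ∀ y ∈ F0, y ∉ (J : Set B) := Set.disjoint_left.mp JdisjF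
    have hI0J : ∀ y ∈ I0, y ∈ (J : Set B) := fun y hy => IJ hy
    refine ⟨(J : Set B)ᶜ, ⟨?_, ?_, ?_, ?_, ?_⟩, ?_, ?_⟩
    · exact ⟨⊤, hF0notJ ⊤ ⟨⊤, htopG, le_top⟩⟩
    · intro hc
      have : (⊥ : B) ∈ (J : Set B) := J.bot_mem
      have : (⊥ : B) ∈ ((J : Set B)ᶜ) := by rw [hc]; trivial
      exact this J.bot_mem
    · intro x y hx hxy hy
      exact hx (J.lower hxy hy)
    · intro x y hx hy
      intro hxy
      rcases hJmeet hxy with h1 | h2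
      · exact hx h1
      · exact hy h2
    · intro x y hxy
      by_contra hc
      push_neg at hc
      obtain ⟨hx, hy⟩ := hc
      simp only [Set.mem_compl_iff, not_not] at hx hy
      exact hxy (Order.Ideal.sup_mem hx hy)
    · exact hF0notJ b ⟨⊤, htopG, by simp [htop]⟩
    · ext a
      simp only [Set.mem_preimage, Set.mem_compl_iff]
      constructor
      · intro hfa
        by_contra haG
        exact hfa (hI0J (f a) ⟨a, haG, le_rfl⟩)
      · intro haG
        exact hF0notJ (f a) ⟨a, haG, inf_le_left⟩
  refine ⟨?_, key⟩
  ext S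
  simp only [Set.mem_setOf_eq]
  constructor
  · rintro ⟨F, ⟨hFne, hFpr, hFup, hFmeet, hFprime⟩, hbF, rfl⟩
    have hbotF : (⊥ : B) ∉ F := by
      intro hbot'
      apply hFpr
      ext x; simp only [Set.mem_univ, iff_true]
      exact hFup ⊥ x hbot' bot_le
    refine ⟨⟨?_, ?_, ?_, ?_, ?_⟩, ?_⟩
    · refine ⟨⊤, ?_⟩
      obtain ⟨x, hx⟩ := hFne
      simp only [Set.mem_preimage, htop]
      exact hFup x ⊤ hx le_top
    · intro hc
      have : (⊥ : A) ∈ f ⁻¹' F := by rw [hc]; trivial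
      simp only [Set.mem_preimage, hbot] at this
      exact hbotF this
    · intro x y hx hxy
      exact hFup _ _ hx (fmono hxy)
    · intro x y hx hy
      simp only [Set.mem_preimage, hmeet]
      exact hFmeet _ _ hx hy
    · intro x y hxy
      simp only [Set.mem_preimage, hjoin] at hxy
      exact hFprime _ _ hxy
    · -- h b ∈ f ⁻¹' F : since b ≤ f (h b)
      have : b ≤ f (h b) := (adj (h b) b).mp le_rfl
      exact hFup b (f (h b)) hbF this
  · rintro ⟨hS, hbS⟩
    obtain ⟨F, hF, hbF, hFS⟩ := key S hS hbS
    exact ⟨F, hF, hbF, hFS.symm⟩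
end

section
/- Let X and Y be spectral spaces (compact, T0, sober topological spaces whose compact open subsets are closed under finite intersections and form a basis of the topology), and let f : X → Y be a spectral map. Suppose the preimage map on compact opens, sending a compact open V ⊆ Y to f ⁻¹' V, has a left adjoint ℓ (a monotone map from compact opens of X to compact opens of Y with ℓ U ⊆ V ↔ U ⊆ f ⁻¹' V) satisfying the Frobenius condition ℓ (U ∩ f ⁻¹' V) = ℓ U ∩ V for all compact open U ⊆ X and compact open V ⊆ Y. Then f is an open map. -/
/-!
For a compact open `U ⊆ X` we show `f '' U = ℓ U`, which is open. The unit of the adjunction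
gives `⊆`. Conversely let `y ∈ ℓ U`, and let `V ∋ y`, `W ∌ y` be compact opens of `Y`. By
Frobenius `ℓ (U ∩ f⁻¹ V) = ℓ U ∩ V` contains `y`, so by adjunction `U ∩ f⁻¹ V ⊄ f⁻¹ W`. The sets
`(U ∩ f⁻¹ V) \ f⁻¹ W` thus form a directed family of nonempty sets that are closed in the
constructible topology of `X`, which is compact. A common point `x` lies in `U`, and `f x` lies
in exactly the same compact opens as `y`, so `f x = y` because `Y` is T0.
-/

open TopologicalSpace Topology

section ConstructibleTopology

variable {X : Type*} [TopologicalSpace X]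

lemma isClosed_constructibleTopology_diff {A B : Set X} (hAc : IsCompact A) (hAo : IsOpen A)
    (hBc : IsCompact B) (hBo : IsOpen B) : IsClosed[constructibleTopology X] (A \ B) :=
  @IsClosed.inter X A Bᶜ (constructibleTopology X)
    (@IsClosed.mk X (constructibleTopology X) _
      (IsCompact.isOpen_constructibleTopology_of_isClosed (by simpa) hAo.isClosed_compl))
    (@IsClosed.mk X (constructibleTopology X) Bᶜ
      (by rw [compl_compl]; exact hBc.isOpen_constructibleTopology_of_isOpen hBo))

theorem nonempty_iInter_diff_of_directed [CompactSpace X] [QuasiSober X] [PrespectralSpace X]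
    [QuasiSeparatedSpace X] {ι : Type*} [Nonempty ι] {A B : ι → Set X}
    (hA : ∀ i, IsCompact (A i) ∧ IsOpen (A i)) (hB : ∀ i, IsCompact (B i) ∧ IsOpen (B i))
    (hdir : Directed (· ⊇ ·) fun i ↦ A i \ B i) (hne : ∀ i, (A i \ B i).Nonempty) :
    (⋂ i, A i \ B i).Nonempty := by
  let K (i : ι) : Set (WithConstructibleTopology X) := WithTopology.ofTopology ⁻¹' (A i \ B i)
  have hK : ∀ i, IsClosed (K i) := fun i ↦ WithConstructibleTopology.isClosed_iff.mpr <|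
    isClosed_constructibleTopology_diff (hA i).1 (hA i).2 (hB i).1 (hB i).2
  -- closed sets are compact by the instance `compactSpace_withConstructibleTopology`
  obtain ⟨x, hx⟩ := IsCompact.nonempty_iInter_of_directed_nonempty_isCompact_isClosed K
    (hdir.mono_comp (g := Set.preimage WithTopology.ofTopology) _ fun _ _ h ↦ Set.preimage_mono h)
    (fun i ↦ (WithTopology.ofTopology_surjective _).nonempty_preimage.mpr (hne i))
    (fun i ↦ (hK i).isCompact) hK
  exact ⟨WithTopology.ofTopology x, Set.mem_iInter.mpr fun i ↦ Set.mem_iInter.mp hx i⟩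

end ConstructibleTopology

/-- Pairs `(V, W)` of compact opens with `y ∈ V \ W`: the sets `V \ W` form a basis of
neighbourhoods of `y` in the constructible topology. -/
def constructibleNhdPairs {Y : Type*} [TopologicalSpace Y] (y : Y) : Set (Set Y × Set Y) :=
  {p | (IsCompact p.1 ∧ IsOpen p.1) ∧ (IsCompact p.2 ∧ IsOpen p.2) ∧ y ∈ p.1 ∧ y ∉ p.2}

lemma directed_inter_preimage_diff_preimage {X Y : Type*} [TopologicalSpace Y]
    [QuasiSeparatedSpace Y] (f : X → Y) (U : Set X) (y : Y) :
    Directed (· ⊇ ·) fun p : constructibleNhdPairs y ↦ (U ∩ f ⁻¹' p.1.1) \ f ⁻¹' p.1.2 := by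
  rintro ⟨⟨V₁, W₁⟩, hV₁, hW₁, hyV₁, hyW₁⟩ ⟨⟨V₂, W₂⟩, hV₂, hW₂, hyV₂, hyW₂⟩
  have hV : IsCompact (V₁ ∩ V₂) ∧ IsOpen (V₁ ∩ V₂) :=
    ⟨QuasiSeparatedSpace.inter_isCompact _ _ hV₁.2 hV₁.1 hV₂.2 hV₂.1, hV₁.2.inter hV₂.2⟩
  have hW : IsCompact (W₁ ∪ W₂) ∧ IsOpen (W₁ ∪ W₂) := ⟨hW₁.1.union hW₂.1, hW₁.2.union hW₂.2⟩
  exact ⟨⟨(V₁ ∩ V₂, W₁ ∪ W₂), hV, hW, ⟨hyV₁, hyV₂⟩, fun h ↦ h.elim hyW₁ hyW₂⟩,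
    fun x hx ↦ ⟨⟨hx.1.1, hx.1.2.1⟩, fun h ↦ hx.2 (.inl h)⟩,
    fun x hx ↦ ⟨⟨hx.1.1, hx.1.2.2⟩, fun h ↦ hx.2 (.inr h)⟩⟩

section Frobenius

variable {X Y : Type*} [TopologicalSpace X] [TopologicalSpace Y] {f : X → Y}
  {ℓ : {U : Set X // IsCompact U ∧ IsOpen U} → {V : Set Y // IsCompact V ∧ IsOpen V}}

lemma isCompact_isOpen_inter_preimage [QuasiSeparatedSpace X] (hf : Continuous f)
    (hspec : ∀ V : Set Y, IsCompact V → IsOpen V → IsCompact (f ⁻¹' V))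
    {U : Set X} (hU : IsCompact U ∧ IsOpen U) {V : Set Y} (hV : IsCompact V ∧ IsOpen V) :
    IsCompact (U ∩ f ⁻¹' V) ∧ IsOpen (U ∩ f ⁻¹' V) :=
  have hfV : IsOpen (f ⁻¹' V) := hV.2.preimage hf
  ⟨QuasiSeparatedSpace.inter_isCompact _ _ hU.2 hU.1 hfV (hspec V hV.1 hV.2), hU.2.inter hfV⟩

lemma nonempty_inter_preimage_diff_preimage_of_frobenius [QuasiSeparatedSpace X]
    (hf : Continuous f) (hspec : ∀ V : Set Y, IsCompact V → IsOpen V → IsCompact (f ⁻¹' V))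
    (adj : ∀ (U : {U : Set X // IsCompact U ∧ IsOpen U})
      (V : {V : Set Y // IsCompact V ∧ IsOpen V}),
      (ℓ U : Set Y) ⊆ (V : Set Y) ↔ (U : Set X) ⊆ f ⁻¹' (V : Set Y))
    (frob : ∀ (U W : {U : Set X // IsCompact U ∧ IsOpen U})
      (V : {V : Set Y // IsCompact V ∧ IsOpen V}),
      (W : Set X) = (U : Set X) ∩ f ⁻¹' (V : Set Y) →
      (ℓ W : Set Y) = (ℓ U : Set Y) ∩ (V : Set Y))
    (U : {U : Set X // IsCompact U ∧ IsOpen U}) {y : Y} (hy : y ∈ (ℓ U : Set Y))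
    {V W : Set Y} (hV : IsCompact V ∧ IsOpen V) (hW : IsCompact W ∧ IsOpen W)
    (hyV : y ∈ V) (hyW : y ∉ W) : (((U : Set X) ∩ f ⁻¹' V) \ f ⁻¹' W).Nonempty := by
  by_contra hempty
  have hUV := isCompact_isOpen_inter_preimage hf hspec U.2 hV
  have hsub : (U : Set X) ∩ f ⁻¹' V ⊆ f ⁻¹' W :=
    Set.sdiff_eq_empty.mp (Set.not_nonempty_iff_eq_empty.mp hempty)
  have hfrob : (ℓ ⟨_, hUV⟩ : Set Y) = (ℓ U : Set Y) ∩ V := frob U ⟨_, hUV⟩ ⟨V, hV⟩ rfl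
  exact hyW ((adj ⟨_, hUV⟩ ⟨W, hW⟩).mpr hsub (hfrob ▸ ⟨hy, hyV⟩))

theorem image_eq_of_frobenius [CompactSpace X] [QuasiSober X] [PrespectralSpace X]
    [QuasiSeparatedSpace X] [T0Space Y] [PrespectralSpace Y] [QuasiSeparatedSpace Y]
    (hf : Continuous f) (hspec : ∀ V : Set Y, IsCompact V → IsOpen V → IsCompact (f ⁻¹' V))
    (adj : ∀ (U : {U : Set X // IsCompact U ∧ IsOpen U})
      (V : {V : Set Y // IsCompact V ∧ IsOpen V}),
      (ℓ U : Set Y) ⊆ (V : Set Y) ↔ (U : Set X) ⊆ f ⁻¹' (V : Set Y))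
    (frob : ∀ (U W : {U : Set X // IsCompact U ∧ IsOpen U})
      (V : {V : Set Y // IsCompact V ∧ IsOpen V}),
      (W : Set X) = (U : Set X) ∩ f ⁻¹' (V : Set Y) →
      (ℓ W : Set Y) = (ℓ U : Set Y) ∩ (V : Set Y))
    (U : {U : Set X // IsCompact U ∧ IsOpen U}) : f '' U = ℓ U := by
  refine (Set.image_subset_iff.mpr ((adj U (ℓ U)).mp subset_rfl)).antisymm fun y hy ↦ ?_
  have hempty : IsCompact (∅ : Set Y) ∧ IsOpen (∅ : Set Y) := ⟨isCompact_empty, isOpen_empty⟩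
  have : Nonempty (constructibleNhdPairs y) := ⟨⟨(ℓ U, ∅), (ℓ U).2, hempty, hy, id⟩⟩
  obtain ⟨x, hx⟩ := nonempty_iInter_diff_of_directed
    (fun p : constructibleNhdPairs y ↦ isCompact_isOpen_inter_preimage hf hspec U.2 p.2.1)
    (fun ⟨_, _, hW, _⟩ ↦ ⟨hspec _ hW.1 hW.2, hW.2.preimage hf⟩)
    (directed_inter_preimage_diff_preimage f U y)
    (fun ⟨_, hV, hW, hyV, hyW⟩ ↦
      nonempty_inter_preimage_diff_preimage_of_frobenius hf hspec adj frob U hy hV hW hyV hyW)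
  have hmem := Set.mem_iInter.mp hx
  refine ⟨x, (hmem this.some).1.1, PrespectralSpace.isTopologicalBasis.eq_iff.mpr
    fun W ⟨hWo, hWc⟩ ↦ ⟨fun hxW ↦ ?_, fun hyW ↦ ?_⟩⟩
  · by_contra hyW
    exact (hmem ⟨(ℓ U, W), (ℓ U).2, ⟨hWc, hWo⟩, hy, hyW⟩).2 hxW
  · exact (hmem ⟨(W, ∅), ⟨hWc, hWo⟩, hempty, hyW, id⟩).1.2

end Frobenius

theorem stmt_11_general {X Y : Type*} [TopologicalSpace X] [TopologicalSpace Y]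
    [CompactSpace X] [QuasiSober X]
    [T0Space Y]
    (hXinter : ∀ U V : Set X, IsCompact U → IsOpen U → IsCompact V → IsOpen V →
      IsCompact (U ∩ V))
    (hXbasis : TopologicalSpace.IsTopologicalBasis
      {U : Set X | IsCompact U ∧ IsOpen U})
    (hYinter : ∀ U V : Set Y, IsCompact U → IsOpen U → IsCompact V → IsOpen V →
      IsCompact (U ∩ V))
    (hYbasis : TopologicalSpace.IsTopologicalBasis
      {U : Set Y | IsCompact U ∧ IsOpen U})
    (f : X → Y) (hf : Continuous f)
    (hspec : ∀ V : Set Y, IsCompact V → IsOpen V → IsCompact (f ⁻¹' V))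
    (ℓ : {U : Set X // IsCompact U ∧ IsOpen U} → {V : Set Y // IsCompact V ∧ IsOpen V})
    (adj : ∀ (U : {U : Set X // IsCompact U ∧ IsOpen U})
      (V : {V : Set Y // IsCompact V ∧ IsOpen V}),
      (ℓ U : Set Y) ⊆ (V : Set Y) ↔ (U : Set X) ⊆ f ⁻¹' (V : Set Y))
    (frob : ∀ (U W : {U : Set X // IsCompact U ∧ IsOpen U})
      (V : {V : Set Y // IsCompact V ∧ IsOpen V}),
      (W : Set X) = (U : Set X) ∩ f ⁻¹' (V : Set Y) →
      (ℓ W : Set Y) = (ℓ U : Set Y) ∩ (V : Set Y)) :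
    IsOpenMap f := by
  have : QuasiSeparatedSpace X := ⟨fun U V hUo hUc hVo hVc ↦ hXinter U V hUc hUo hVc hVo⟩
  have : QuasiSeparatedSpace Y := ⟨fun U V hUo hUc hVo hVc ↦ hYinter U V hUc hUo hVc hVo⟩
  have : PrespectralSpace X := .of_isTopologicalBasis hXbasis fun _ h ↦ h.1
  have : PrespectralSpace Y := .of_isTopologicalBasis hYbasis fun _ h ↦ h.1
  refine hXbasis.isOpenMap_iff.mpr fun U hU ↦ ?_
  rw [image_eq_of_frobenius hf hspec adj frob ⟨U, hU⟩]
  exact (ℓ ⟨U, hU⟩).2.2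

/-- Let `X`, `Y` be spectral spaces (compact, T0, sober, with compact opens
closed under finite intersections and forming a basis) and `f : X → Y` a
spectral map. If the preimage map between the lattices of compact open sets
has a monotone left adjoint `ℓ` satisfying the Frobenius condition, then `f`
is an open map. -/
theorem stmt_11 {X Y : Type*} [TopologicalSpace X] [TopologicalSpace Y]
    [CompactSpace X] [T0Space X] [QuasiSober X]
    [CompactSpace Y] [T0Space Y] [QuasiSober Y]
    (hXinter : ∀ U V : Set X, IsCompact U → IsOpen U → IsCompact V → IsOpen V →
      IsCompact (U ∩ V))
    (hXbasis : TopologicalSpace.IsTopologicalBasis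
      {U : Set X | IsCompact U ∧ IsOpen U})
    (hYinter : ∀ U V : Set Y, IsCompact U → IsOpen U → IsCompact V → IsOpen V →
      IsCompact (U ∩ V))
    (hYbasis : TopologicalSpace.IsTopologicalBasis
      {U : Set Y | IsCompact U ∧ IsOpen U})
    (f : X → Y) (hf : Continuous f)
    (hspec : ∀ V : Set Y, IsCompact V → IsOpen V → IsCompact (f ⁻¹' V))
    (ℓ : {U : Set X // IsCompact U ∧ IsOpen U} → {V : Set Y // IsCompact V ∧ IsOpen V})
    (hℓmono : Monotone ℓ)
    (adj : ∀ (U : {U : Set X // IsCompact U ∧ IsOpen U})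
      (V : {V : Set Y // IsCompact V ∧ IsOpen V}),
      (ℓ U : Set Y) ⊆ (V : Set Y) ↔ (U : Set X) ⊆ f ⁻¹' (V : Set Y))
    (frob : ∀ (U W : {U : Set X // IsCompact U ∧ IsOpen U})
      (V : {V : Set Y // IsCompact V ∧ IsOpen V}),
      (W : Set X) = (U : Set X) ∩ f ⁻¹' (V : Set Y) →
      (ℓ W : Set Y) = (ℓ U : Set Y) ∩ (V : Set Y)) :
    IsOpenMap f :=
  stmt_11_general hXinter hXbasis hYinter hYbasis f hf hspec ℓ adj frob
end
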